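/- The reconfiguration graph R_8(G₁₆) of the 8-colourings of the graph G₁₆ is disconnected; that is, G₁₆ is an 8-colourable graph that is not 8-mixing. -/

import Mathlib

/-- The 7-colouring `α` of the 16 vertices, given by the sequence
`1,2,3,4,5,7,2,3,4,5,1,2,3,4,6,7` at positions `0,…,15`. -/
def α16 : ZMod 16 → Fin 7 :=
  fun i => ![1, 2, 3, 4, 5, 7, 2, 3, 4, 5, 1, 2, 3, 4, 6, 7] ⟨i.val, ZMod.val_lt i⟩

/-- The 8-colouring `β` given by `β i = i mod 8`. -/
def β16 : ZMod 16 → Fin 8 := fun i => Fin.ofNat 8 i.val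

/-- The graph `G₁₆` on `ZMod 16`: `i` is adjacent to `j` iff `i ≠ j` and either the circular
distance between `i` and `j` is at most `4`, or both `α16 i ≠ α16 j` and `β16 i ≠ β16 j`. -/
def G16 : SimpleGraph (ZMod 16) where
  Adj i j := i ≠ j ∧
    (min (i - j).val (j - i).val ≤ 4 ∨ (α16 i ≠ α16 j ∧ β16 i ≠ β16 j))
  symm := by
    constructor
    rintro i j ⟨h1, h2⟩
    refine ⟨h1.symm, ?_⟩
    rcases h2 with h | ⟨ha, hb⟩
    · exact Or.inl (by rwa [min_comm])
    · exact Or.inr ⟨ha.symm, hb.symm⟩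
  loopless := ⟨fun i h => h.1 rfl⟩

/-- The reconfiguration graph `R_k(G)`: vertices are the proper `k`-colourings of `G`,
two colourings being adjacent iff they differ in colour on exactly one vertex. -/
def Recfg {V : Type*} (G : SimpleGraph V) (k : ℕ) :
    SimpleGraph {f : V → Fin k // ∀ v w, G.Adj v w → f v ≠ f w} where
  Adj f g := ∃! v, f.1 v ≠ g.1 v
  symm := by
    constructor
    rintro f g ⟨v, hv, hu⟩
    exact ⟨v, hv.symm, fun w hw => hu w hw.symm⟩
  loopless := by
    constructor
    rintro f ⟨v, hv, -⟩
    exact hv rfl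

/-!
The colouring `β i = i mod 8` is frozen: every vertex sees each of the other seven colours on
a neighbour, so no single vertex can be recoloured and `β` is an isolated vertex of `R₈(G₁₆)`.
Since `β + 1` is another proper 8-colouring, `R₈(G₁₆)` is disconnected.
-/

def IsFrozenColouring {V : Type*} (G : SimpleGraph V) {k : ℕ} (f : V → Fin k) : Prop :=
  ∀ v c, c ≠ f v → ∃ w, G.Adj v w ∧ f w = c

lemma SimpleGraph.not_connected_of_ne_of_forall_not_adj {W : Type*} {G : SimpleGraph W}
    {x y : W} (hxy : x ≠ y) (hx : ∀ z, ¬ G.Adj x z) : ¬ G.Connected := fun h =>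
  let ⟨p⟩ := h x y
  hx _ (p.adj_snd (SimpleGraph.Walk.not_nil_of_ne hxy))

lemma Recfg.not_adj_of_isFrozenColouring {V : Type*} {G : SimpleGraph V} {k : ℕ}
    (f g : {f : V → Fin k // ∀ v w, G.Adj v w → f v ≠ f w}) (hf : IsFrozenColouring G f.1) :
    ¬ (Recfg G k).Adj f g := by
  rintro ⟨v, hv, hunique⟩
  obtain ⟨w, hvw, hw⟩ := hf v (g.1 v) (Ne.symm hv)
  have hgw : g.1 w = f.1 w := by
    by_contra hne
    have : w = v := hunique w (Ne.symm hne)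
    subst this
    exact hv hw
  exact g.2 v w hvw (by rw [hgw, hw])

instance : DecidableRel G16.Adj := fun i j =>
  inferInstanceAs (Decidable (i ≠ j ∧
    (min (i - j).val (j - i).val ≤ 4 ∨ (α16 i ≠ α16 j ∧ β16 i ≠ β16 j))))

lemma β16_proper : ∀ v w, G16.Adj v w → β16 v ≠ β16 w := by decide

lemma β16_isFrozenColouring : IsFrozenColouring G16 β16 := by
  unfold IsFrozenColouring
  decide

/-- `G₁₆` is 8-colourable but not 8-mixing: the reconfiguration graph of its
8-colourings is disconnected. -/
theorem statement7 :
    (∃ f : ZMod 16 → Fin 8, ∀ v w, G16.Adj v w → f v ≠ f w) ∧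
    ¬ (Recfg G16 8).Connected := by
  let β : {f : ZMod 16 → Fin 8 // ∀ v w, G16.Adj v w → f v ≠ f w} := ⟨β16, β16_proper⟩
  let β' : {f : ZMod 16 → Fin 8 // ∀ v w, G16.Adj v w → f v ≠ f w} :=
    ⟨fun i => β16 i + 1, fun v w h => by simpa using β16_proper v w h⟩
  have hne : β ≠ β' := fun h => absurd (congrFun (congrArg Subtype.val h) 0) (by decide)
  exact ⟨⟨β16, β16_proper⟩, SimpleGraph.not_connected_of_ne_of_forall_not_adj hne
    fun g => Recfg.not_adj_of_isFrozenColouring β g β16_isFrozenColouring⟩
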